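/- arXiv:1904.13318 — 3 statements merged into one kernel-verified Lean document; each statement's English description precedes it below -/
import Mathlib

section
/- Let d1, d2, d3 ≥ 1 and let B1, B2, B3 denote the full matrix algebras of operators on the three tensor factors of ℂ^{d1} ⊗ ℂ^{d2} ⊗ ℂ^{d3}. Let A12 be a subalgebra of B1 ⊗ B2 (operators acting as the identity on the third factor) and A23 a subalgebra of B2 ⊗ B3 (operators acting as the identity on the first factor). If every element of A12 commutes with every element of A23, then every element of the support algebra S(A12, B2) commutes with every element of the support algebra S(A23, B2). -/
open scoped Kronecker

namespace QCA

variable {ι : Type} [Fintype ι] [DecidableEq ι]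
variable (F : ι → Type) [∀ i, Fintype (F i)] [∀ i, DecidableEq (F i)]

/-- Configurations: the product basis labels of the lattice Hilbert space `⨂ i, ℂ^(F i)`. -/
abbrev Conf : Type := ∀ i, F i

/-- Operators on the lattice Hilbert space, as matrices in the product basis. -/
abbrev Ops : Type := Matrix (Conf F) (Conf F) ℂ

/-- `A` is localized on the region `R` if it has the form `B ⊗ 1` with respect to the
splitting `R | Rᶜ` of the tensor factors (entrywise characterization). -/
def Localized (A : Ops F) (R : Set ι) : Prop :=
  (∀ x y : Conf F, A x y ≠ 0 → ∀ i ∉ R, x i = y i) ∧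
  (∀ x y x' y' : Conf F, (∀ i ∈ R, x i = x' i) → (∀ i ∈ R, y i = y' i) →
      (∀ i ∉ R, x i = y i) → (∀ i ∉ R, x' i = y' i) → A x y = A x' y')

/-- Heisenberg evolution `A ↦ U* A U`. -/
noncomputable def heis (U A : Ops F) : Ops F := star U * A * U

/-- The support algebra `S(𝒮, R)`: the smallest subalgebra of operators localized on `R`
such that `𝒮` is contained in (the algebra generated by) it together with the full algebra
of operators localized on `Rᶜ`. -/
noncomputable def supportAlgebra (S : Set (Ops F)) (R : Set ι) : Subalgebra ℂ (Ops F) :=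
  sInf {C : Subalgebra ℂ (Ops F) |
    (C : Set (Ops F)) ⊆ {A | Localized F A R} ∧
    S ⊆ ↑(Algebra.adjoin ℂ ((C : Set (Ops F)) ∪ {A | Localized F A Rᶜ}))}

section Ring

variable {M : ℕ} (sector : ZMod M → Finset ι)

/-- `U` is a nearest-neighbour QCA for the ring of `M` (super)cells described by `sector`:
`U` is unitary, and conjugation by `U` maps operators localized on cell `k` to operators
localized on cells `{k-1, k, k+1}`. -/
def IsRingQCA (U : Ops F) : Prop :=
  U ∈ Matrix.unitaryGroup (Conf F) ℂ ∧
  ∀ (k : ZMod M) (A : Ops F), Localized F A ↑(sector k) →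
    Localized F (heis F U A) (↑(sector (k - 1)) ∪ ↑(sector k) ∪ ↑(sector (k + 1)))

/-- The even support algebra `R_k = S(u(A_k ⊗ A_{k+1}), A_{k-1} ⊗ A_k)` (`k` an even site). -/
noncomputable def REven (U : Ops F) (k : ZMod M) : Subalgebra ℂ (Ops F) :=
  supportAlgebra F (heis F U '' {A | Localized F A (↑(sector k) ∪ ↑(sector (k + 1)))})
    (↑(sector (k - 1)) ∪ ↑(sector k))

/-- The odd support algebra `R_{k+1} = S(u(A_k ⊗ A_{k+1}), A_{k+1} ⊗ A_{k+2})` (`k` even). -/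
noncomputable def ROdd (U : Ops F) (k : ZMod M) : Subalgebra ℂ (Ops F) :=
  supportAlgebra F (heis F U '' {A | Localized F A (↑(sector k) ∪ ↑(sector (k + 1)))})
    (↑(sector (k + 1)) ∪ ↑(sector (k + 2)))

/-- The Hilbert space dimension of the (super)cell `k`. -/
def siteDim (k : ZMod M) : ℕ := ∏ i ∈ sector k, Fintype.card (F i)

/-- `r` with `C ≅ M_r(ℂ)`, recovered as the square root of the linear dimension of `C`. -/
noncomputable def rdim (C : Subalgebra ℂ (Ops F)) : ℕ := Nat.sqrt (Module.finrank ℂ C)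

/-- The GNVW index `ind[U] = r_{2n} / d_{2n}`, evaluated at the even site `2n = 0`. -/
noncomputable def ringIndex (U : Ops F) : ℚ :=
  (rdim F (REven F sector U 0) : ℚ) / (siteDim F sector 0 : ℚ)

end Ring

/-- The standard ring structure: one site per cell. -/
def stdSector (N : ℕ) : ZMod N → Finset (ZMod N) := fun n => {n}

/-- The embedding of a one-site operator at site `i` into the lattice algebra. -/
noncomputable def embedAt (i : ι) (B : Matrix (F i) (F i) ℂ) : Ops F :=
  fun x y => (if ∀ j, j ≠ i → x j = y j then 1 else 0) * B (x i) (y i)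

/-- Pairing of configurations of two parallel lattices. -/
def confPairEquiv (G : ι → Type) [∀ i, Fintype (G i)] [∀ i, DecidableEq (G i)] :
    (Conf F × Conf G) ≃ Conf (fun i => F i × G i) where
  toFun p := fun i => (p.1 i, p.2 i)
  invFun x := (fun i => (x i).1, fun i => (x i).2)
  left_inv _ := rfl
  right_inv _ := rfl

/-- The tensor product `A ⊗ B` of operators on two parallel lattices, as an operator on the
lattice whose site `i` carries the qudit `F i × G i`. -/
noncomputable def tensorOps (G : ι → Type) [∀ i, Fintype (G i)] [∀ i, DecidableEq (G i)]
    (A : Ops F) (B : Ops G) : Ops (fun i => F i × G i) :=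
  Matrix.reindex (confPairEquiv F G) (confPairEquiv F G) (A ⊗ₖ B)

end QCA

/-! Fix a site `i` and let `E k l` be the matrix unit `|k⟩⟨l|` at `i`. Every operator decomposes
as `a = ∑ k l, E k l * coeffAt a i k l` with `coeffAt a i k l = ∑ m, E m k * a * E l m`, and if `a`
is localized on `insert i R` its coefficients are localized on `R`. An operator acting trivially at
`i` commutes with every `E k l`, so if it commutes with `a` it commutes with all coefficients of
`a`. Hence, when every element of `T` acts trivially at `i` and commutes with `S`, the algebra
`locAlg R ⊓ centralizer T` is among those whose infimum defines `S(S, R)`.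

For the theorem, take `i = 0`, `S = A12`, `T = A23`: the support algebra `S(A12, B2)` lies in the
commutant of `A23` and is localized on site `1`. Then take `i = 2`, `S = A23`,
`T = S(A12, B2)`. -/

namespace QCA

variable {ι : Type} {F : ι → Type}

section Localized

variable {A B : Ops F} {R R' : Set ι}

theorem Localized.apply_eq_zero (hA : Localized F A R) {x y : Conf F} {j : ι} (hj : j ∉ R)
    (hxy : x j ≠ y j) : A x y = 0 :=
  not_not.mp fun h => hxy (hA.1 x y h j hj)

theorem eq_iff_eq_of_agree {x y x' y' : Conf F} (hx : ∀ j ∈ R, x j = x' j)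
    (hy : ∀ j ∈ R, y j = y' j) (hxy : ∀ j ∉ R, x j = y j) (hxy' : ∀ j ∉ R, x' j = y' j)
    (j : ι) : x j = y j ↔ x' j = y' j := by
  by_cases hj : j ∈ R
  · rw [hx j hj, hy j hj]
  · exact iff_of_true (hxy j hj) (hxy' j hj)

theorem Localized.mono (hA : Localized F A R) (h : R ⊆ R') : Localized F A R' := by
  refine ⟨fun x y hxy j hj => hA.1 x y hxy j fun hjR => hj (h hjR), ?_⟩
  intro x y x' y' hx hy hxy hxy'
  have key := eq_iff_eq_of_agree hx hy hxy hxy'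
  by_cases hoff : ∀ j ∉ R, x j = y j
  · exact hA.2 _ _ _ _ (fun j hj => hx j (h hj)) (fun j hj => hy j (h hj)) hoff
      fun j hj => (key j).1 (hoff j hj)
  · obtain ⟨j, hj, hne⟩ := not_forall₂.mp hoff
    rw [hA.apply_eq_zero hj hne, hA.apply_eq_zero hj ((key j).not.1 hne)]

theorem localized_zero : Localized F 0 R :=
  ⟨fun _ _ h => absurd rfl h, fun _ _ _ _ _ _ _ _ => rfl⟩

theorem Localized.add (hA : Localized F A R) (hB : Localized F B R) :
    Localized F (A + B) R := by
  refine ⟨fun x y hxy j hj => ?_, fun x y x' y' hx hy hxy hxy' => ?_⟩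
  · by_cases h : A x y = 0
    · rw [Matrix.add_apply, h, zero_add] at hxy
      exact hB.1 x y hxy j hj
    · exact hA.1 x y h j hj
  · simp only [Matrix.add_apply, hA.2 x y x' y' hx hy hxy hxy', hB.2 x y x' y' hx hy hxy hxy']

theorem Localized.apply_update_eq [DecidableEq ι] {c : Ops F} {i : ι} (hc : Localized F c {i}ᶜ)
    (x y : Conf F) : c x (Function.update y i (x i)) = c (Function.update x i (y i)) y := by
  refine hc.2 _ _ _ _ (fun j hj => ?_) (fun j hj => ?_) (fun j hj => ?_) fun j hj => ?_
  all_goals first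
    | rw [Function.update_of_ne hj]
    | rw [Set.notMem_compl_iff.1 hj, Function.update_self]

variable [Fintype ι] [DecidableEq ι] [∀ i, Fintype (F i)] [∀ i, DecidableEq (F i)]

theorem localized_algebraMap (c : ℂ) : Localized F (algebraMap ℂ (Ops F) c) R := by
  refine ⟨fun x y hxy j _ => ?_, fun x y x' y' hx hy hxy hxy' => ?_⟩
  · rw [Matrix.algebraMap_matrix_apply] at hxy
    by_cases h : x = y
    · rw [h]
    · exact absurd (if_neg h) hxy
  · have key : x = y ↔ x' = y' := by
      simp only [funext_iff]
      exact forall_congr' (eq_iff_eq_of_agree hx hy hxy hxy')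
    simp only [Matrix.algebraMap_matrix_apply, key]

theorem Localized.mul (hA : Localized F A R) (hB : Localized F B R) :
    Localized F (A * B) R := by
  refine ⟨fun x y hxy j hj => ?_, fun x y x' y' hx hy hxy hxy' => ?_⟩
  · obtain ⟨z, -, hz⟩ := Finset.exists_ne_zero_of_sum_ne_zero hxy
    rw [hA.1 x z (left_ne_zero_of_mul hz) j hj, hB.1 z y (right_ne_zero_of_mul hz) j hj]
  -- Moving the intermediate configuration from `x` to `x'` off `R` is a bijection; on `R`
  -- the swaps are trivial because `x` and `x'` agree there.
  set σ : Conf F ≃ Conf F := Equiv.piCongrRight fun j => Equiv.swap (x j) (x' j)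
  have hσ : ∀ z j, σ z j = Equiv.swap (x j) (x' j) (z j) := fun _ _ => rfl
  simp only [Matrix.mul_apply]
  refine Fintype.sum_equiv σ _ _ fun z => ?_
  by_cases hz : ∀ j ∉ R, x j = z j
  · have hσR : ∀ j ∈ R, z j = σ z j := fun j hj => by
      rw [hσ, hx j hj, Equiv.swap_self, Equiv.refl_apply]
    have hσoff : ∀ j ∉ R, x' j = σ z j := fun j hj => by
      rw [hσ, ← hz j hj, Equiv.swap_apply_left]
    rw [hA.2 x z x' (σ z) hx hσR hz hσoff, hB.2 z y (σ z) y' hσR hy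
      (fun j hj => (hz j hj).symm.trans (hxy j hj)) fun j hj => (hσoff j hj).symm.trans (hxy' j hj)]
  · obtain ⟨j, hj, hne⟩ := not_forall₂.mp hz
    have hne' : x' j ≠ σ z j := fun h =>
      hne <| (Equiv.swap (x j) (x' j)).injective <| (Equiv.swap_apply_left _ _).trans h
    rw [hA.apply_eq_zero hj hne, hA.apply_eq_zero hj hne', zero_mul, zero_mul]

variable (F) in
noncomputable def locAlg (R : Set ι) : Subalgebra ℂ (Ops F) where
  carrier := {A | Localized F A R}
  mul_mem' := Localized.mul
  add_mem' := Localized.add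
  zero_mem' := localized_zero
  one_mem' := map_one (algebraMap ℂ (Ops F)) ▸ localized_algebraMap 1
  algebraMap_mem' := localized_algebraMap

end Localized

section Site

variable [Fintype ι] [DecidableEq ι] [∀ i, DecidableEq (F i)]

theorem localized_embedAt (i : ι) (B : Matrix (F i) (F i) ℂ) :
    Localized F (embedAt F i B) {i} := by
  refine ⟨fun x y h j hj => ?_, fun x y x' y' hx hy hxy hxy' => ?_⟩
  · by_contra hne
    exact h (by rw [embedAt, if_neg fun hall => hne (hall j hj), zero_mul])
  · have hoff : ∀ j, j ≠ i → x j = y j := hxy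
    have hoff' : ∀ j, j ≠ i → x' j = y' j := hxy'
    simp only [embedAt, if_pos hoff, if_pos hoff', hx i rfl, hy i rfl]

variable [∀ i, Fintype (F i)]

theorem sum_conf_eq_sum_update (x : Conf F) (i : ι) (f : Conf F → ℂ)
    (hf : ∀ z, f z ≠ 0 → ∀ j ≠ i, z j = x j) :
    ∑ z, f z = ∑ m : F i, f (Function.update x i m) := by
  rw [← Finset.sum_image fun m _ n _ h => Function.update_injective x i h]
  refine (Finset.sum_subset (Finset.subset_univ _) fun z _ hz => ?_).symm
  by_contra h
  exact hz (Finset.mem_image.2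
    ⟨z i, Finset.mem_univ _, (Function.eq_update_iff.2 ⟨rfl, hf z h⟩).symm⟩)

theorem embedAt_mul_apply (i : ι) (B : Matrix (F i) (F i) ℂ) (A : Ops F) (x y : Conf F) :
    (embedAt F i B * A) x y = ∑ m, B (x i) m * A (Function.update x i m) y := by
  rw [Matrix.mul_apply, sum_conf_eq_sum_update x i]
  · simp +contextual [embedAt]
  · exact fun z h j hj => ((localized_embedAt i B).1 x z (left_ne_zero_of_mul h) j hj).symm

theorem mul_embedAt_apply (i : ι) (B : Matrix (F i) (F i) ℂ) (A : Ops F) (x y : Conf F) :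
    (A * embedAt F i B) x y = ∑ m, A x (Function.update y i m) * B m (y i) := by
  rw [Matrix.mul_apply, sum_conf_eq_sum_update y i]
  · simp +contextual [embedAt]
  · exact fun z h j hj => (localized_embedAt i B).1 z y (right_ne_zero_of_mul h) j hj

noncomputable def coeffAt (a : Ops F) (i : ι) (k l : F i) : Ops F :=
  ∑ m, embedAt F i (Matrix.single m k 1) * a * embedAt F i (Matrix.single l m 1)

theorem coeffAt_apply (a : Ops F) (i : ι) (k l : F i) (x y : Conf F) :
    coeffAt a i k l x y =
      if x i = y i then a (Function.update x i k) (Function.update y i l) else 0 := by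
  simp [coeffAt, Matrix.sum_apply, mul_assoc, embedAt_mul_apply, mul_embedAt_apply,
    Matrix.single_apply, ite_and, Finset.sum_ite_irrel, eq_comm]

theorem sum_embedAt_mul_coeffAt (a : Ops F) (i : ι) :
    ∑ k, ∑ l, embedAt F i (Matrix.single k l 1) * coeffAt a i k l = a := by
  ext x y
  simp [Matrix.sum_apply, embedAt_mul_apply, coeffAt_apply, Matrix.single_apply, ite_and]

theorem commute_embedAt {c : Ops F} {i : ι} (hc : Localized F c {i}ᶜ)
    (B : Matrix (F i) (F i) ℂ) : Commute c (embedAt F i B) := by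
  have hi : i ∉ ({i} : Set ι)ᶜ := Set.notMem_compl_iff.2 rfl
  ext x y
  rw [mul_embedAt_apply, embedAt_mul_apply, Fintype.sum_eq_single (x i), Fintype.sum_eq_single (y i),
    hc.apply_update_eq, mul_comm]
  · exact fun m hm => by rw [hc.apply_eq_zero hi (by simpa using hm), mul_zero]
  · exact fun m hm => by rw [hc.apply_eq_zero hi (by simpa using Ne.symm hm), zero_mul]

theorem commute_coeffAt {a c : Ops F} {i : ι} (hc : Localized F c {i}ᶜ) (ha : Commute c a)
    (k l : F i) : Commute c (coeffAt a i k l) :=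
  Commute.sum_right _ _ _ fun _ _ =>
    ((commute_embedAt hc _).mul_right ha).mul_right (commute_embedAt hc _)

theorem Localized.coeffAt {a : Ops F} {R : Set ι} (ha : Localized F a R) {i : ι} (hi : i ∈ R)
    (k l : F i) : Localized F (coeffAt a i k l) (R \ {i}) := by
  have hi' : i ∉ R \ {i} := fun h => h.2 rfl
  refine ⟨fun x y h j hj => ?_, fun x y x' y' hx hy hxy hxy' => ?_⟩
  · rw [coeffAt_apply] at h
    split_ifs at h with hxy
    · by_cases hji : j = i
      · exact hji ▸ hxy
      · simpa [Function.update_of_ne hji] using ha.1 _ _ h j fun hjR => hj ⟨hjR, hji⟩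
    · exact absurd rfl h
  · rw [coeffAt_apply, coeffAt_apply, if_pos (hxy i hi'), if_pos (hxy' i hi')]
    refine ha.2 _ _ _ _ (fun j hj => ?_) (fun j hj => ?_) (fun j hj => ?_) fun j hj => ?_
    · rcases eq_or_ne j i with rfl | hji
      · simp
      · simp [Function.update_of_ne hji, hx j ⟨hj, hji⟩]
    · rcases eq_or_ne j i with rfl | hji
      · simp
      · simp [Function.update_of_ne hji, hy j ⟨hj, hji⟩]
    · have hji : j ≠ i := fun h => hj (h ▸ hi)
      simp [Function.update_of_ne hji, hxy j fun h => hj h.1]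
    · have hji : j ≠ i := fun h => hj (h ▸ hi)
      simp [Function.update_of_ne hji, hxy' j fun h => hj h.1]

theorem mem_adjoin_of_coeffAt_mem {C : Set (Ops F)} {R : Set ι} {i : ι} (hi : i ∉ R) {a : Ops F}
    (hC : ∀ k l, coeffAt a i k l ∈ C) :
    a ∈ Algebra.adjoin ℂ (C ∪ {A | Localized F A Rᶜ}) := by
  rw [← sum_embedAt_mul_coeffAt a i]
  refine Subalgebra.sum_mem _ fun k _ => Subalgebra.sum_mem _ fun l _ =>
    Subalgebra.mul_mem _ (Algebra.subset_adjoin (Or.inr ?_)) (Algebra.subset_adjoin (Or.inl (hC k l)))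
  exact (localized_embedAt i _).mono (Set.singleton_subset_iff.2 hi)

theorem supportAlgebra_le_locAlg_inf_centralizer {S T : Set (Ops F)} {R : Set ι} {i : ι}
    (hi : i ∉ R) (hS : ∀ a ∈ S, Localized F a (insert i R)) (hT : ∀ b ∈ T, Localized F b {i}ᶜ)
    (hST : ∀ a ∈ S, ∀ b ∈ T, Commute a b) :
    supportAlgebra F S R ≤ locAlg F R ⊓ Subalgebra.centralizer ℂ T := by
  refine sInf_le ⟨fun _ hC => (Algebra.mem_inf.1 hC).1, fun a ha => mem_adjoin_of_coeffAt_mem hi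
    fun k l => Algebra.mem_inf.2 ⟨?_, (Subalgebra.mem_centralizer_iff ℂ).2 fun b hb => ?_⟩⟩
  · have hcoeff := (hS a ha).coeffAt (Set.mem_insert i R) k l
    rwa [Set.insert_sdiff_self_of_notMem hi] at hcoeff
  · exact commute_coeffAt (hT b hb) (hST a ha b hb).symm k l

end Site

theorem supportAlgebras_commute_general (d : Fin 3 → ℕ)
    (A12 A23 : Subalgebra ℂ (Ops (fun i : Fin 3 => Fin (d i))))
    (h12 : (A12 : Set (Ops (fun i : Fin 3 => Fin (d i)))) ⊆
      {A | Localized (fun i : Fin 3 => Fin (d i)) A ({0, 1} : Set (Fin 3))})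
    (h23 : (A23 : Set (Ops (fun i : Fin 3 => Fin (d i)))) ⊆
      {A | Localized (fun i : Fin 3 => Fin (d i)) A ({1, 2} : Set (Fin 3))})
    (hcomm : ∀ a ∈ A12, ∀ b ∈ A23, a * b = b * a) :
    ∀ x ∈ supportAlgebra (fun i : Fin 3 => Fin (d i)) (A12 : Set (Ops (fun i : Fin 3 => Fin (d i))))
        ({1} : Set (Fin 3)),
      ∀ y ∈ supportAlgebra (fun i : Fin 3 => Fin (d i)) (A23 : Set (Ops (fun i : Fin 3 => Fin (d i))))
        ({1} : Set (Fin 3)),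
        x * y = y * x := by
  intro x hx y hy
  have hS12 := supportAlgebra_le_locAlg_inf_centralizer (i := 0) (by simp) (fun a ha => h12 ha)
    (fun b hb => (h23 hb).mono (by simp [Set.subset_compl_singleton_iff]))
    hcomm
  have hS23 := supportAlgebra_le_locAlg_inf_centralizer (i := 2) (by simp)
    (fun b hb => Set.pair_comm (1 : Fin 3) 2 ▸ h23 hb)
    (fun a ha => (hS12 ha).1.mono (by simp [Set.subset_compl_singleton_iff]))
    fun b hb a ha => (Subalgebra.mem_centralizer_iff ℂ).1 (hS12 ha).2 b hb
  exact (Subalgebra.mem_centralizer_iff ℂ).1 (hS23 hy).2 x hx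

/-- If every element of a subalgebra `A12` of `B1 ⊗ B2` commutes with every
element of a subalgebra `A23` of `B2 ⊗ B3`, then the support algebras `S(A12, B2)` and
`S(A23, B2)` commute elementwise. -/
theorem supportAlgebras_commute (d : Fin 3 → ℕ) (hd : ∀ i, 1 ≤ d i)
    (A12 A23 : Subalgebra ℂ (Ops (fun i : Fin 3 => Fin (d i))))
    (h12 : (A12 : Set (Ops (fun i : Fin 3 => Fin (d i)))) ⊆
      {A | Localized (fun i : Fin 3 => Fin (d i)) A ({0, 1} : Set (Fin 3))})
    (h23 : (A23 : Set (Ops (fun i : Fin 3 => Fin (d i)))) ⊆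
      {A | Localized (fun i : Fin 3 => Fin (d i)) A ({1, 2} : Set (Fin 3))})
    (hcomm : ∀ a ∈ A12, ∀ b ∈ A23, a * b = b * a) :
    ∀ x ∈ supportAlgebra (fun i : Fin 3 => Fin (d i)) (A12 : Set (Ops (fun i : Fin 3 => Fin (d i))))
        ({1} : Set (Fin 3)),
      ∀ y ∈ supportAlgebra (fun i : Fin 3 => Fin (d i)) (A23 : Set (Ops (fun i : Fin 3 => Fin (d i))))
        ({1} : Set (Fin 3)),
        x * y = y * x :=
  supportAlgebras_commute_general d A12 A23 h12 h23 hcomm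

end QCA
end

section
/- Let H, A, B be D × D complex matrices. Suppose there exists T > 0 such that the commutator [B, e^{itH} A e^{−itH}] = 0 for all real t with 0 ≤ t < T. Then [B, e^{itH} A e^{−itH}] = 0 for all t ∈ ℝ. In particular, if an operator evolving under continuous-time matrix dynamics commutes with B during any short initial time interval, it commutes with B for all times. -/
open scoped Kronecker

namespace QCA

variable {ι : Type} [Fintype ι] [DecidableEq ι]
variable (F : ι → Type) [∀ i, Fintype (F i)] [∀ i, DecidableEq (F i)]

/-- The Heisenberg evolution `e^{itH} A e^{-itH}` of a matrix `A` under the continuous-time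
dynamics generated by `H`. -/
noncomputable def heisenbergAt (D : ℕ) (H A : Matrix (Fin D) (Fin D) ℂ) (t : ℝ) :
    Matrix (Fin D) (Fin D) ℂ :=
  NormedSpace.exp (((t : ℂ) * Complex.I) • H) * A *
    NormedSpace.exp ((-((t : ℂ) * Complex.I)) • H)

/-!
Since the matrix exponential is entire, the commutator `t ↦ [B, e^{itH} A e^{-itH}]` is a
real-analytic function of `t`. By the identity theorem, an analytic function on `ℝ`
vanishing on `[0, T)` vanishes identically.
-/

end QCA

open Filter Topology NormedSpace

theorem AnalyticOnNhd.eq_zero_of_eventually_nhdsGT {E : Type*} [NormedAddCommGroup E]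
    [NormedSpace ℝ E] {f : ℝ → E} (hf : AnalyticOnNhd ℝ f Set.univ) {a : ℝ}
    (h : ∀ᶠ t in 𝓝[>] a, f t = 0) : f = 0 := by
  have hfreq : ∃ᶠ t in 𝓝[≠] a, f t = 0 :=
    h.frequently.filter_mono (nhdsWithin_mono a fun _ ht => ne_of_gt ht)
  funext t
  exact hf.eqOn_zero_of_preconnected_of_frequently_eq_zero isPreconnected_univ
    (Set.mem_univ a) hfreq (Set.mem_univ t)

theorem analyticAt_exp_smul_mul_mul_exp_neg_smul {𝕂 𝔸 : Type*} [RCLike 𝕂] [NormedRing 𝔸]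
    [NormedAlgebra 𝕂 𝔸] [CompleteSpace 𝔸] (X A : 𝔸) (t : 𝕂) :
    AnalyticAt 𝕂 (fun s : 𝕂 => exp (s • X) * A * exp (-s • X)) t := by
  have hexp : ∀ c : 𝕂, AnalyticAt 𝕂 (fun s : 𝕂 => exp ((c * s) • X)) t := fun c =>
    (exp_analytic _).comp ((analyticAt_const.mul analyticAt_id).smul analyticAt_const)
  simpa only [one_mul, neg_one_mul] using ((hexp 1).fun_mul analyticAt_const).fun_mul (hexp (-1))

namespace QCA

theorem heisenbergAt_eq_exp_real_smul (D : ℕ) (H A : Matrix (Fin D) (Fin D) ℂ) (t : ℝ) :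
    heisenbergAt D H A t = exp (t • (Complex.I • H)) * A * exp (-t • (Complex.I • H)) := by
  simp only [heisenbergAt, ← smul_smul, neg_smul, ← Complex.coe_smul]

-- Any matrix norm would do: it only serves to make the matrices a Banach algebra.
open scoped Matrix.Norms.Operator

/-- If `[B, e^{itH} A e^{-itH}] = 0` for all `0 ≤ t < T` (some `T > 0`),
then `[B, e^{itH} A e^{-itH}] = 0` for all real `t`: an operator commuting with `B` during
any short initial time interval of continuous-time matrix dynamics commutes with `B`
forever. -/
theorem commute_briefly_commute_forever (D : ℕ) (H A B : Matrix (Fin D) (Fin D) ℂ)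
    (T : ℝ) (hT : 0 < T)
    (h : ∀ t : ℝ, 0 ≤ t → t < T →
      B * heisenbergAt D H A t - heisenbergAt D H A t * B = 0) :
    ∀ t : ℝ, B * heisenbergAt D H A t - heisenbergAt D H A t * B = 0 := by
  have hanalytic : AnalyticOnNhd ℝ
      (fun t : ℝ => B * heisenbergAt D H A t - heisenbergAt D H A t * B) Set.univ := by
    intro t _
    have hconj := analyticAt_exp_smul_mul_mul_exp_neg_smul (Complex.I • H) A t
    simp only [heisenbergAt_eq_exp_real_smul]
    exact (analyticAt_const.fun_mul hconj).fun_sub (hconj.fun_mul analyticAt_const)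
  have hnear : ∀ᶠ t in 𝓝[>] (0 : ℝ), B * heisenbergAt D H A t - heisenbergAt D H A t * B = 0 :=
    mem_of_superset (Ioo_mem_nhdsGT hT) fun t ht => h t ht.1.le ht.2
  exact congrFun (hanalytic.eq_zero_of_eventually_nhdsGT hnear)

end QCA
end

section
/- Let N ≥ 5 and index the qubits of (ℂ²)^{⊗N} by ℤ/N, with X_n, Y_n, Z_n the Pauli operators acting on site n. There exists a unitary U on (ℂ²)^{⊗N} such that for every n, U* X_n U = Z_n and U* Z_n U = Z_{n−1} X_n Z_{n+1}. Moreover any such U has gliders: U* (X_n Z_{n+1}) U = X_{n+1} Z_{n+2} (a right-mover) and U* (Z_n X_{n+1}) U = Z_{n−1} X_n (a left-mover) for every n. -/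
open scoped Kronecker

namespace QCA

variable {ι : Type} [Fintype ι] [DecidableEq ι]
variable (F : ι → Type) [∀ i, Fintype (F i)] [∀ i, DecidableEq (F i)]

/-- The Pauli matrix `X`. -/
noncomputable def pauliX : Matrix (Fin 2) (Fin 2) ℂ := !![0, 1; 1, 0]

/-- The Pauli matrix `Z`. -/
noncomputable def pauliZ : Matrix (Fin 2) (Fin 2) ℂ := !![1, 0; 0, -1]

/-- The Pauli `X` operator at site `n` of a ring of `N` qubits. -/
noncomputable def Xop (N : ℕ) [NeZero N] (n : ZMod N) : Ops (fun _ : ZMod N => Fin 2) :=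
  embedAt (fun _ : ZMod N => Fin 2) n pauliX

/-- The Pauli `Z` operator at site `n` of a ring of `N` qubits. -/
noncomputable def Zop (N : ℕ) [NeZero N] (n : ZMod N) : Ops (fun _ : ZMod N => Fin 2) :=
  embedAt (fun _ : ZMod N => Fin 2) n pauliZ

end QCA

/-!
The unitary is `U = H^{⊗N} · CZ`, a controlled-`Z` on every edge of the ring followed by a Hadamard
on every qubit, with matrix entries `U x y = 2^{-N/2} (-1)^{x ⬝ y + ∑ᵢ yᵢ yᵢ₊₁}`. Under
`A ↦ U* A U` the Hadamard layer exchanges `Xₙ` and `Zₙ`, and the controlled-`Z` layer then fixes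
`Zₙ` and dresses `Xₙ` into `Zₙ₋₁ Xₙ Zₙ₊₁`; entrywise this is the effect on the exponent of flipping
one bit of `x` or of `y`. Unitarity is the orthogonality of the characters `z ↦ (-1)^{z ⬝ w}`.
The gliders only use that conjugation by a unitary is multiplicative and that `Zₙ² = 1`.
-/

theorem AddChar.map_sum_eq_prod {A M ι : Type*} [AddCommMonoid A] [CommMonoid M]
    (ψ : AddChar A M) (s : Finset ι) (f : ι → A) : ψ (∑ i ∈ s, f i) = ∏ i ∈ s, ψ (f i) :=
  map_prod ψ.toMonoidHom (fun i => Multiplicative.ofAdd (f i)) s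

namespace Unitary

variable {R : Type*} [Monoid R] [StarMul R] {U : R}

theorem star_mul_mul_of_mul_eq_mul (hU : U ∈ unitary R) {a b : R} (h : a * U = U * b) :
    star U * a * U = b := by
  rw [mul_assoc, h, ← mul_assoc, star_mul_self_of_mem hU, one_mul]

theorem star_mul_mul_distrib (hU : U ∈ unitary R) (a b : R) :
    star U * (a * b) * U = star U * a * U * (star U * b * U) := by
  calc star U * (a * b) * U = star U * a * (U * star U) * b * U := by
        rw [mul_star_self_of_mem hU, mul_one, mul_assoc (star U) a b]
    _ = star U * a * U * (star U * b * U) := by simp only [mul_assoc]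

end Unitary

namespace QCA

open Matrix Fin.CommRing

-- `Fin 2` is `ZMod 2` by definition.
noncomputable def sgn : AddChar (Fin 2) ℂ := AddChar.zmodChar 2 (by norm_num : (-1 : ℂ) ^ 2 = 1)

theorem sgn_one : sgn 1 = -1 := pow_one _

theorem sgn_mul_self (a : Fin 2) : sgn a * sgn a = 1 := by
  rw [← AddChar.map_add_eq_mul, CharTwo.add_self_eq_zero, AddChar.map_zero_eq_one]

theorem star_sgn (a : Fin 2) : star (sgn a) = sgn a := by
  fin_cases a <;> simp [sgn_one]

theorem sum_sgn_mul (b : Fin 2) : ∑ a, sgn (a * b) = if b = 0 then 2 else 0 := by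
  fin_cases b <;> simp [Fin.sum_univ_two, sgn_one]

theorem sum_sgn_dotProduct {ι : Type} [Fintype ι] [DecidableEq ι] (w : ι → Fin 2) :
    ∑ z : ι → Fin 2, sgn (z ⬝ᵥ w) = if w = 0 then 2 ^ Fintype.card ι else 0 := by
  simp_rw [dotProduct, AddChar.map_sum_eq_prod]
  rw [← Fintype.prod_sum (fun i a => sgn (a * w i))]
  simp_rw [sum_sgn_mul, Finset.prod_ite_zero, funext_iff]
  simp

section Embedding

variable {ι : Type} [DecidableEq ι]

theorem add_single_eq_iff_eq_add_single (i : ι) {x y : ι → Fin 2} :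
    x + Pi.single i 1 = y ↔ x = y + Pi.single i 1 := by
  constructor <;> rintro rfl <;>
    rw [add_assoc, ← Pi.single_add, CharTwo.add_self_eq_zero, Pi.single_zero, add_zero]

variable [Fintype ι]

theorem embedAt_apply (F : ι → Type) [∀ i, DecidableEq (F i)] (i : ι) (B : Matrix (F i) (F i) ℂ)
    (x y : Conf F) :
    embedAt F i B x y = if ∀ j ≠ i, x j = y j then B (x i) (y i) else 0 := by
  simp [embedAt]

theorem embedAt_diagonal (F : ι → Type) [∀ i, DecidableEq (F i)] (i : ι) (d : F i → ℂ) :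
    embedAt F i (diagonal d) = diagonal fun x => d (x i) := by
  ext x y
  rw [embedAt_apply, diagonal_apply, diagonal_apply, ← ite_and]
  refine if_congr ⟨fun ⟨h1, h2⟩ => funext fun j => ?_, fun h => ⟨fun j _ => h ▸ rfl, h ▸ rfl⟩⟩
    rfl rfl
  by_cases hj : j = i
  · exact hj ▸ h2
  · exact h1 j hj

theorem pauliZ_eq_diagonal : pauliZ = diagonal fun a => sgn a := by
  ext a b
  fin_cases a <;> fin_cases b <;> simp [pauliZ, sgn_one]

theorem embedAt_pauliZ (i : ι) :
    embedAt (fun _ : ι => Fin 2) i pauliZ = diagonal fun x => sgn (x i) := by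
  rw [pauliZ_eq_diagonal, embedAt_diagonal]

theorem embedAt_pauliZ_mul_self (i : ι) :
    embedAt (fun _ : ι => Fin 2) i pauliZ * embedAt (fun _ : ι => Fin 2) i pauliZ = 1 := by
  simp [embedAt_pauliZ, diagonal_mul_diagonal, sgn_mul_self]

theorem embedAt_pauliX_apply (i : ι) (x y : ι → Fin 2) :
    embedAt (fun _ : ι => Fin 2) i pauliX x y = if y = x + Pi.single i 1 then 1 else 0 := by
  have hX : ∀ a b : Fin 2, pauliX a b = if b = a + 1 then 1 else 0 := by
    intro a b; fin_cases a <;> fin_cases b <;> simp [pauliX]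
  rw [embedAt_apply, hX, ← ite_and]
  refine if_congr ⟨fun ⟨h1, h2⟩ => funext fun j => ?_, fun h => ⟨fun j hj => ?_, ?_⟩⟩ rfl rfl
  · by_cases hj : j = i
    · subst hj; simpa using h2
    · simp [hj, h1 j hj]
  · simp [h, hj]
  · simp [h]

theorem embedAt_pauliX_mul_apply (i : ι) (A : Ops (fun _ : ι => Fin 2)) (x y : ι → Fin 2) :
    (embedAt (fun _ : ι => Fin 2) i pauliX * A) x y = A (x + Pi.single i 1) y := by
  simp [mul_apply, embedAt_pauliX_apply]

theorem mul_embedAt_pauliX_apply (i : ι) (A : Ops (fun _ : ι => Fin 2)) (x y : ι → Fin 2) :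
    (A * embedAt (fun _ : ι => Fin 2) i pauliX) x y = A x (y + Pi.single i 1) := by
  simp [mul_apply, embedAt_pauliX_apply, eq_comm (a := y), add_single_eq_iff_eq_add_single]

end Embedding

section CliffordQCA

variable {N : ℕ} [NeZero N]

def cyclicForm (y : ZMod N → Fin 2) : Fin 2 := ∑ i, y i * y (i + 1)

theorem cyclicForm_add_single (hN : (1 : ZMod N) ≠ 0) (y : ZMod N → Fin 2) (n : ZMod N) :
    cyclicForm (y + Pi.single n 1) = cyclicForm y + y (n - 1) + y (n + 1) := by
  have hsucc : n + 1 ≠ n := by simpa using hN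
  have single_mul_single : ∀ i, Pi.single (M := fun _ => Fin 2) n 1 i *
      Pi.single (M := fun _ => Fin 2) n 1 (i + 1) = 0 := by
    intro i
    by_cases hi : i = n
    · subst hi; simp [hsucc]
    · simp [hi]
  have shift : ∑ i, y i * Pi.single (M := fun _ => Fin 2) n 1 (i + 1) = y (n - 1) := by
    rw [← (Equiv.subRight 1).sum_comp]
    simp [Pi.single_apply]
  simp only [cyclicForm, Pi.add_apply, add_mul, mul_add, Finset.sum_add_distrib,
    single_mul_single, shift]
  simp only [Pi.single_apply, ite_mul, one_mul, zero_mul, Finset.sum_ite_eq', Finset.mem_univ,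
    if_true, Finset.sum_const_zero, add_zero]
  ring

noncomputable def cliffordU (N : ℕ) [NeZero N] : Ops (fun _ : ZMod N => Fin 2) :=
  fun x y => ((Real.sqrt 2)⁻¹ ^ N : ℝ) * sgn (x ⬝ᵥ y + cyclicForm y)

theorem cliffordU_add_single_left (n : ZMod N) (x y : ZMod N → Fin 2) :
    cliffordU N (x + Pi.single n 1) y = sgn (y n) * cliffordU N x y := by
  simp only [cliffordU, add_dotProduct, single_dotProduct, one_mul, add_assoc,
    AddChar.map_add_eq_mul]
  ring

theorem cliffordU_add_single_right (hN : (1 : ZMod N) ≠ 0) (n : ZMod N) (x y : ZMod N → Fin 2) :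
    cliffordU N x (y + Pi.single n 1) = sgn (x n + y (n - 1) + y (n + 1)) * cliffordU N x y := by
  simp only [cliffordU, cyclicForm_add_single hN, dotProduct_add, dotProduct_single, mul_one]
  rw [← mul_left_comm, ← AddChar.map_add_eq_mul]
  congr 2
  ring

theorem cliffordU_mem_unitaryGroup : cliffordU N ∈ unitaryGroup (ZMod N → Fin 2) ℂ := by
  rw [mem_unitaryGroup_iff']
  ext x y
  have norm_sq : ((Real.sqrt 2)⁻¹ ^ N : ℝ) ^ 2 * 2 ^ N = (1 : ℂ) := by
    have : ((Real.sqrt 2)⁻¹ ^ N) ^ 2 * 2 ^ N = (1 : ℝ) := by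
      rw [← pow_mul, mul_comm N 2, pow_mul, ← mul_pow]
      norm_num
    exact_mod_cast this
  have entry : ∀ z, star (cliffordU N z x) * cliffordU N z y =
      ((Real.sqrt 2)⁻¹ ^ N : ℝ) ^ 2 * sgn (cyclicForm x + cyclicForm y) * sgn (z ⬝ᵥ (x + y)) := by
    intro z
    simp only [cliffordU, star_mul', star_sgn, Complex.star_def, Complex.conj_ofReal]
    rw [mul_mul_mul_comm, ← sq, mul_assoc, ← AddChar.map_add_eq_mul, ← AddChar.map_add_eq_mul,
      dotProduct_add]
    congr 2
    ring
  simp only [star_apply, mul_apply, entry, ← Finset.mul_sum, sum_sgn_dotProduct,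
    CharTwo.add_eq_zero, one_apply]
  split_ifs with h
  · rw [h, CharTwo.add_self_eq_zero, AddChar.map_zero_eq_one, mul_one, ZMod.card, norm_sq]
  · rw [mul_zero]

theorem Xop_mul_cliffordU (n : ZMod N) : Xop N n * cliffordU N = cliffordU N * Zop N n := by
  ext x y
  rw [Xop, embedAt_pauliX_mul_apply, Zop, embedAt_pauliZ, mul_diagonal,
    cliffordU_add_single_left, mul_comm]

theorem Zop_mul_cliffordU (hN : (1 : ZMod N) ≠ 0) (n : ZMod N) :
    Zop N n * cliffordU N = cliffordU N * (Zop N (n - 1) * Xop N n * Zop N (n + 1)) := by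
  have hpred : n - 1 ≠ n := by simpa [sub_eq_self] using hN
  ext x y
  simp only [← mul_assoc, Zop, Xop, embedAt_pauliZ, diagonal_mul, mul_diagonal,
    mul_embedAt_pauliX_apply, Pi.add_apply, Pi.single_eq_of_ne hpred, add_zero,
    cliffordU_add_single_right hN, AddChar.map_add_eq_mul]
  linear_combination (-(sgn (x n) * cliffordU N x y * sgn (y (n + 1)) ^ 2)) *
    sgn_mul_self (y (n - 1)) - sgn (x n) * cliffordU N x y * sgn_mul_self (y (n + 1))

theorem conj_gliders {U : Ops (fun _ : ZMod N => Fin 2)} (hU : U ∈ unitaryGroup _ ℂ)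
    (h : ∀ n : ZMod N, star U * Xop N n * U = Zop N n ∧
      star U * Zop N n * U = Zop N (n - 1) * Xop N n * Zop N (n + 1)) (n : ZMod N) :
    star U * (Xop N n * Zop N (n + 1)) * U = Xop N (n + 1) * Zop N (n + 2) ∧
      star U * (Zop N n * Xop N (n + 1)) * U = Zop N (n - 1) * Xop N n := by
  have hZZ : ∀ m, Zop N m * Zop N m = 1 := embedAt_pauliZ_mul_self
  simp only [Unitary.star_mul_mul_distrib hU, (h n).1, (h n).2, (h (n + 1)).1, (h (n + 1)).2,
    add_sub_cancel_right, add_assoc, one_add_one_eq_two]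
  constructor
  · rw [← mul_assoc, ← mul_assoc, hZZ, one_mul]
  · rw [mul_assoc _ (Zop N (n + 1)), hZZ, mul_one]

end CliffordQCA

/-- On a ring of `N ≥ 5` qubits there exists a (Clifford QCA) unitary `U`
with `U* Xₙ U = Zₙ` and `U* Zₙ U = Z_{n-1} Xₙ Z_{n+1}` for every `n`; moreover any such `U`
has gliders: `U* (Xₙ Z_{n+1}) U = X_{n+1} Z_{n+2}` and `U* (Zₙ X_{n+1}) U = Z_{n-1} Xₙ`. -/
theorem clifford_qca_with_gliders (N : ℕ) [NeZero N] (hN : 5 ≤ N) :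
    (∃ U ∈ Matrix.unitaryGroup (Conf (fun _ : ZMod N => Fin 2)) ℂ,
      ∀ n : ZMod N, star U * Xop N n * U = Zop N n ∧
        star U * Zop N n * U = Zop N (n - 1) * Xop N n * Zop N (n + 1)) ∧
    ∀ U ∈ Matrix.unitaryGroup (Conf (fun _ : ZMod N => Fin 2)) ℂ,
      (∀ n : ZMod N, star U * Xop N n * U = Zop N n ∧
        star U * Zop N n * U = Zop N (n - 1) * Xop N n * Zop N (n + 1)) →
      ∀ n : ZMod N,
        star U * (Xop N n * Zop N (n + 1)) * U = Xop N (n + 1) * Zop N (n + 2) ∧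
        star U * (Zop N n * Xop N (n + 1)) * U = Zop N (n - 1) * Xop N n := by
  have hone : (1 : ZMod N) ≠ 0 := by
    have : Fact (1 < N) := ⟨by omega⟩
    exact one_ne_zero
  have hU := cliffordU_mem_unitaryGroup (N := N)
  exact ⟨⟨cliffordU N, hU, fun n =>
      ⟨Unitary.star_mul_mul_of_mul_eq_mul hU (Xop_mul_cliffordU n),
        Unitary.star_mul_mul_of_mul_eq_mul hU (Zop_mul_cliffordU hone n)⟩⟩,
    fun _ hU h => conj_gliders hU h⟩

end QCA
end
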